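/- arXiv:2112.05497 — 3 statements merged into one kernel-verified Lean document; each statement's English description precedes it below -/
import Mathlib

section
/- Under the hypotheses of the previous statement, if additionally Δ is persistently exciting, i.e., there exist T > 0 and μ > 0 with ∫_t^{t+T} Δ(s)² ds ≥ μ for all t ≥ 0, then |θ̂(t) − θ| → 0 exponentially: there exist c, λ > 0 with |θ̂(t) − θ| ≤ c e^{−λ t} |θ̂(0) − θ|. -/
/-!
Along the flow, `V = |θ̂ - θ|²` satisfies `V' ≤ -2γρΔ² V` by strong monotonicity, so
`V(t) ≤ V(0) exp(-2γρ ∫₀ᵗ Δ²)`. Persistent excitation makes `∫₀ᵗ Δ² ≥ μ (t/T - 1)`, which turns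
this into exponential decay; the Euclidean and sup norms on `ℝ^q` differ by a factor `√q`.
-/

open Real Matrix

section DotProduct

variable {ι : Type*} [Fintype ι]

theorem HasDerivAt.dotProduct {f g : ℝ → ι → ℝ} {f' g' : ι → ℝ} {t : ℝ}
    (hf : HasDerivAt f f' t) (hg : HasDerivAt g g' t) :
    HasDerivAt (fun s => f s ⬝ᵥ g s) (f' ⬝ᵥ g t + f t ⬝ᵥ g') t := by
  have hterm : ∀ i ∈ Finset.univ, HasDerivAt (fun s => f s i * g s i)
      (f' i * g t i + f t i * g' i) t :=
    fun i _ => (hasDerivAt_pi.1 hf i).mul (hasDerivAt_pi.1 hg i)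
  have hsum := HasDerivAt.fun_sum hterm
  rwa [Finset.sum_add_distrib] at hsum

theorem HasDerivAt.dotProduct_self {f : ℝ → ι → ℝ} {f' : ι → ℝ} {t : ℝ}
    (hf : HasDerivAt f f' t) :
    HasDerivAt (fun s => f s ⬝ᵥ f s) (2 * (f t ⬝ᵥ f')) t :=
  (hf.dotProduct hf).congr_deriv (by rw [dotProduct_comm]; ring)

theorem sq_norm_le_dotProduct_self (x : ι → ℝ) : ‖x‖ ^ 2 ≤ x ⬝ᵥ x := by
  have hx : 0 ≤ x ⬝ᵥ x := Finset.sum_nonneg fun i _ => mul_self_nonneg (x i)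
  suffices ‖x‖ ≤ √(x ⬝ᵥ x) from (pow_le_pow_left₀ (norm_nonneg x) this 2).trans (sq_sqrt hx).le
  refine (pi_norm_le_iff_of_nonneg (sqrt_nonneg _)).2 fun i => ?_
  rw [norm_eq_abs, ← sqrt_sq_eq_abs, sq]
  exact sqrt_le_sqrt (Finset.single_le_sum (f := fun j => x j * x j)
    (fun j _ => mul_self_nonneg (x j)) (Finset.mem_univ i))

theorem dotProduct_self_le_card_mul_sq_norm (x : ι → ℝ) :
    x ⬝ᵥ x ≤ Fintype.card ι * ‖x‖ ^ 2 := by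
  calc x ⬝ᵥ x ≤ ∑ _i : ι, ‖x‖ ^ 2 := Finset.sum_le_sum fun i _ => by
        rw [← sq, ← sq_abs, ← norm_eq_abs]
        exact pow_le_pow_left₀ (norm_nonneg _) (norm_le_pi_norm x i) 2
    _ = Fintype.card ι * ‖x‖ ^ 2 := by simp

theorem dotProduct_smul_le_of_strongly_monotone {H : (ι → ℝ) → ι → ℝ} {ρ c : ℝ}
    (hmono : ∀ a b : ι → ℝ, (a - b) ⬝ᵥ (H a - H b) ≥ ρ * ((a - b) ⬝ᵥ (a - b)))
    (hc : c ≤ 0) (x y : ι → ℝ) :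
    (x - y) ⬝ᵥ (c • (H x - H y)) ≤ c * ρ * ((x - y) ⬝ᵥ (x - y)) := by
  rw [dotProduct_smul, smul_eq_mul, mul_assoc]
  exact mul_le_mul_of_nonpos_left (hmono x y) hc

end DotProduct

theorem le_mul_exp_neg_integral_of_hasDerivAt {V V' a : ℝ → ℝ} (ha : Continuous a)
    (hV : ∀ t, 0 ≤ t → HasDerivAt V (V' t) t) (hV' : ∀ t, 0 ≤ t → V' t ≤ -(a t * V t))
    {t : ℝ} (ht : 0 ≤ t) : V t ≤ V 0 * exp (-∫ s in 0..t, a s) := by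
  set A : ℝ → ℝ := fun u => ∫ s in 0..u, a s
  have hA : ∀ u, HasDerivAt A (a u) u := fun u => (ha.integral_hasStrictDerivAt 0 u).hasDerivAt
  -- `V * exp A` is nonincreasing: its derivative is `(V' + a V) exp A ≤ 0`.
  have hanti : AntitoneOn (fun u => V u * exp (A u)) (Set.Ici 0) := by
    refine antitoneOn_of_hasDerivWithinAt_nonpos (convex_Ici 0)
      (f' := fun u => V' u * exp (A u) + V u * (exp (A u) * a u)) ?_ ?_ ?_
    · exact fun u hu => ((hV u hu).continuousAt.mul (hA u).continuousAt.rexp).continuousWithinAt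
    · rw [interior_Ici]
      exact fun u hu => ((hV u (le_of_lt hu)).mul (hA u).exp).hasDerivWithinAt
    · rw [interior_Ici]
      intro u hu
      have := mul_le_mul_of_nonneg_right (hV' u (le_of_lt hu)) (exp_pos (A u)).le
      linarith
  have := hanti Set.self_mem_Ici ht ht
  simp only [A, intervalIntegral.integral_same, exp_zero, mul_one] at this
  rw [exp_neg, ← div_eq_mul_inv, le_div_iff₀ (exp_pos _)]
  exact this

def PersistentlyExciting (f : ℝ → ℝ) (T μ : ℝ) : Prop :=
  ∀ t : ℝ, 0 ≤ t → μ ≤ ∫ s in t..(t + T), f s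

namespace PersistentlyExciting

variable {f : ℝ → ℝ} {T μ : ℝ}

theorem const_mul (h : PersistentlyExciting f T μ) {c : ℝ} (hc : 0 ≤ c) :
    PersistentlyExciting (fun s => c * f s) T (c * μ) := fun t ht => by
  rw [intervalIntegral.integral_const_mul]
  exact mul_le_mul_of_nonneg_left (h t ht) hc

theorem nat_mul_le_integral (h : PersistentlyExciting f T μ) (hf : Continuous f) (hT : 0 ≤ T)
    (n : ℕ) : n * μ ≤ ∫ s in 0..n * T, f s := by
  induction n with
  | zero => simp
  | succ n ih =>
    have hsplit := intervalIntegral.integral_add_adjacent_intervals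
      (hf.intervalIntegrable (μ := MeasureTheory.volume) 0 (n * T))
      (hf.intervalIntegrable (n * T) (n * T + T))
    have hstep := h (n * T) (by positivity)
    push_cast
    rw [add_one_mul (n : ℝ) T, ← hsplit]
    linarith

theorem le_integral (h : PersistentlyExciting f T μ) (hf : Continuous f) (hf0 : 0 ≤ f)
    (hT : 0 < T) (hμ : 0 ≤ μ) {t : ℝ} (ht : 0 ≤ t) :
    μ * (t / T - 1) ≤ ∫ s in 0..t, f s := by
  set n := ⌊t / T⌋₊
  have hnT : n * T ≤ t := (le_div_iff₀ hT).1 (Nat.floor_le (div_nonneg ht hT.le))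
  have hsplit := intervalIntegral.integral_add_adjacent_intervals
    (hf.intervalIntegrable (μ := MeasureTheory.volume) 0 (n * T))
    (hf.intervalIntegrable (n * T) t)
  have htail : 0 ≤ ∫ s in n * T..t, f s := intervalIntegral.integral_nonneg hnT fun s _ => hf0 s
  have hn : μ * (t / T - 1) ≤ n * μ := by
    nlinarith [Nat.lt_floor_add_one (t / T)]
  linarith [h.nat_mul_le_integral hf hT.le n]

theorem le_exp_mul_of_hasDerivAt (h : PersistentlyExciting f T μ) (hf : Continuous f)
    (hf0 : 0 ≤ f) (hT : 0 < T) (hμ : 0 ≤ μ) {V V' : ℝ → ℝ}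
    (hV : ∀ t, 0 ≤ t → HasDerivAt V (V' t) t) (hV' : ∀ t, 0 ≤ t → V' t ≤ -(f t * V t))
    (hV0 : 0 ≤ V 0) {t : ℝ} (ht : 0 ≤ t) :
    V t ≤ exp μ * exp (-(μ / T) * t) * V 0 := by
  calc V t ≤ V 0 * exp (-∫ s in 0..t, f s) := le_mul_exp_neg_integral_of_hasDerivAt hf hV hV' ht
    _ ≤ V 0 * exp (-(μ * (t / T - 1))) := by
        gcongr
        exact h.le_integral hf hf0 hT hμ ht
    _ = exp μ * exp (-(μ / T) * t) * V 0 := by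
        rw [← exp_add]
        ring_nf

end PersistentlyExciting

theorem drem_pe_exponential_convergence_general {q : ℕ}
    (H : (Fin q → ℝ) → (Fin q → ℝ)) (ρ : ℝ) (hρ : 0 < ρ)
    (hmono : ∀ a b : Fin q → ℝ,
      (a - b) ⬝ᵥ (H a - H b) ≥ ρ * ((a - b) ⬝ᵥ (a - b)))
    (θ : Fin q → ℝ) (γ : ℝ) (hγ : 0 < γ)
    (Δ : ℝ → ℝ) (hΔc : Continuous Δ)
    (θh : ℝ → Fin q → ℝ)
    (hode : ∀ t : ℝ, 0 ≤ t →
      HasDerivAt θh ((-γ * (Δ t) ^ 2) • (H (θh t) - H θ)) t)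
    (T μ : ℝ) (hT : 0 < T) (hμ : 0 < μ)
    (hpe : ∀ t : ℝ, 0 ≤ t → μ ≤ ∫ s in t..(t + T), (Δ s) ^ 2) :
    ∃ c > (0 : ℝ), ∃ lam > (0 : ℝ), ∀ t ≥ (0 : ℝ),
      ‖θh t - θ‖ ≤ c * Real.exp (-lam * t) * ‖θh 0 - θ‖ := by
  set k := 2 * γ * ρ
  set e := fun t => θh t - θ
  have hV : ∀ t, 0 ≤ t → HasDerivAt (fun s => e s ⬝ᵥ e s)
      (2 * (e t ⬝ᵥ ((-γ * Δ t ^ 2) • (H (θh t) - H θ)))) t :=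
    fun t ht => ((hode t ht).sub_const θ).dotProduct_self
  have hV' : ∀ t, 0 ≤ t → 2 * (e t ⬝ᵥ ((-γ * Δ t ^ 2) • (H (θh t) - H θ))) ≤
      -(k * Δ t ^ 2 * (e t ⬝ᵥ e t)) := fun t _ => by
    have := dotProduct_smul_le_of_strongly_monotone hmono
      (by nlinarith [sq_nonneg (Δ t)] : -γ * Δ t ^ 2 ≤ 0) (θh t) θ
    linarith
  have hexc : PersistentlyExciting (fun s => k * Δ s ^ 2) T (k * μ) :=
    PersistentlyExciting.const_mul hpe (by positivity)
  refine ⟨√(q + 1) * exp (k * μ / 2), by positivity, k * μ / (2 * T), by positivity,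
    fun t ht => ?_⟩
  rw [← pow_le_pow_iff_left₀ (norm_nonneg _) (by positivity) two_ne_zero]
  calc ‖e t‖ ^ 2 ≤ e t ⬝ᵥ e t := sq_norm_le_dotProduct_self _
    _ ≤ exp (k * μ) * exp (-(k * μ / T) * t) * (e 0 ⬝ᵥ e 0) :=
        hexc.le_exp_mul_of_hasDerivAt (by fun_prop) (fun s => by positivity) hT (by positivity)
          hV hV' (Finset.sum_nonneg fun i _ => mul_self_nonneg _) ht
    _ ≤ exp (k * μ) * exp (-(k * μ / T) * t) * ((q + 1) * ‖e 0‖ ^ 2) := by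
        gcongr
        refine (dotProduct_self_le_card_mul_sq_norm (e 0)).trans ?_
        rw [Fintype.card_fin]
        gcongr
        exact le_add_of_nonneg_right zero_le_one
    _ = (√(q + 1) * exp (k * μ / 2) * exp (-(k * μ / (2 * T)) * t) * ‖e 0‖) ^ 2 := by
        rw [mul_pow, mul_pow, mul_pow, sq_sqrt (by positivity), ← exp_nat_mul, ← exp_nat_mul]
        field_simp
        ring_nf

/-- under the hypotheses of Statement 11, if moreover `Δ` is
persistently exciting, then `θ̂(t) → θ` exponentially. -/
theorem drem_pe_exponential_convergence {q : ℕ}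
    (H : (Fin q → ℝ) → (Fin q → ℝ)) (ρ : ℝ) (hρ : 0 < ρ)
    (hmono : ∀ a b : Fin q → ℝ,
      (a - b) ⬝ᵥ (H a - H b) ≥ ρ * ((a - b) ⬝ᵥ (a - b)))
    (hlip : LocallyLipschitz H)
    (θ : Fin q → ℝ) (γ : ℝ) (hγ : 0 < γ)
    (Δ : ℝ → ℝ) (hΔc : Continuous Δ) (hΔb : ∃ M : ℝ, ∀ t : ℝ, 0 ≤ t → |Δ t| ≤ M)
    (θh : ℝ → Fin q → ℝ)
    (hode : ∀ t : ℝ, 0 ≤ t →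
      HasDerivAt θh ((-γ * (Δ t) ^ 2) • (H (θh t) - H θ)) t)
    (T μ : ℝ) (hT : 0 < T) (hμ : 0 < μ)
    (hpe : ∀ t : ℝ, 0 ≤ t → μ ≤ ∫ s in t..(t + T), (Δ s) ^ 2) :
    ∃ c > (0 : ℝ), ∃ lam > (0 : ℝ), ∀ t ≥ (0 : ℝ),
      ‖θh t - θ‖ ≤ c * Real.exp (-lam * t) * ‖θh 0 - θ‖ :=
  drem_pe_exponential_convergence_general H ρ hρ hmono θ γ hγ Δ hΔc θh hode T μ hT hμ hpe
end

section
/- Let Ω : ℝ≥0 → ℝ^{m×p} be continuous and bounded, α > 0 and f₀ > 0. Let F solve the matrix Riccati-type ODE F'(t) = −α F(t) Ω(t)ᵀ Ω(t) F(t) with F(0) = (1/f₀) I_p. Then F(t) is invertible for all t ≥ 0, F(t)⁻¹ = f₀ I_p + α ∫₀ᵗ Ω(s)ᵀΩ(s) ds, and F(t) is symmetric positive definite with F(t) ⪯ (1/f₀) I_p for all t ≥ 0. -/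
/-!
Put `S t = α ∫₀ᵗ ΩᵀΩ` and `G = f₀ I + S`, so that `G' = α ΩᵀΩ`. The Riccati equation and the
product rule give `(F G - I)' = -α F ΩᵀΩ (F G - I)`: a linear equation with continuous coefficient
and zero initial value, so Grönwall's inequality forces `F G = I`. As `S` is positive semidefinite,
`G` is positive definite, hence so is `F = G⁻¹`; and writing `x = G y = f₀ y + S y` gives
`f₀ ⟪x, F x⟫ = ⟪x, x⟫ - ⟪x, S y⟫ = ⟪x, x⟫ - f₀ ⟪y, S y⟫ - ‖S y‖² ≤ ⟪x, x⟫`.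
-/

open Matrix Set

theorem eq_zero_of_hasDerivAt_eq_mul_self {R : Type*} [NormedRing R] [NormedSpace ℝ R]
    {u A : ℝ → R} {a b : ℝ} (hA : ContinuousOn A (Icc a b))
    (hu : ∀ t ∈ Icc a b, HasDerivAt u (A t * u t) t) (ha : u a = 0) :
    ∀ t ∈ Icc a b, u t = 0 := by
  obtain ⟨C, hC⟩ := isCompact_Icc.exists_bound_of_continuousOn hA
  refine eq_zero_of_abs_deriv_le_mul_abs_self_of_eq_zero_right (K := C)
    (fun t ht => (hu t ht).continuousAt.continuousWithinAt)
    (fun t ht => (hu t (Ico_subset_Icc_self ht)).hasDerivWithinAt) ha fun t ht => ?_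
  calc ‖A t * u t‖ ≤ ‖A t‖ * ‖u t‖ := norm_mul_le _ _
    _ ≤ C * ‖u t‖ := by gcongr; exact hC t (Ico_subset_Icc_self ht)

namespace Matrix

variable {m n : Type*} [Fintype m] [Fintype n]

theorem dotProduct_of_intervalIntegral_mulVec {P : ℝ → Matrix m n ℝ} (hP : Continuous P)
    (x : m → ℝ) (y : n → ℝ) (a b : ℝ) :
    x ⬝ᵥ (of fun i j => ∫ s in a..b, P s i j) *ᵥ y = ∫ s in a..b, x ⬝ᵥ P s *ᵥ y := by
  have hP' : ∀ i j, Continuous fun s => x i * (P s i j * y j) := fun i j =>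
    continuous_const.mul ((hP.matrix_elem i j).mul continuous_const)
  simp only [dotProduct, mulVec, of_apply, Finset.mul_sum]
  rw [intervalIntegral.integral_finsetSum fun i _ =>
    (continuous_finsetSum _ fun j _ => hP' i j).intervalIntegrable a b]
  refine Finset.sum_congr rfl fun i _ => ?_
  rw [intervalIntegral.integral_finsetSum fun j _ => (hP' i j).intervalIntegrable a b]
  refine Finset.sum_congr rfl fun j _ => ?_
  rw [intervalIntegral.integral_const_mul, intervalIntegral.integral_mul_const]

theorem dotProduct_mulVec_le_of_smul_one_add_mul_eq_one [DecidableEq n] {c : ℝ} (hc : 0 < c)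
    {S F : Matrix n n ℝ} (hS : S.PosSemidef) (hF : (c • 1 + S) * F = 1) (x : n → ℝ) :
    x ⬝ᵥ F *ᵥ x ≤ c⁻¹ * (x ⬝ᵥ x) := by
  set y := F *ᵥ x
  have hx : x = c • y + S *ᵥ y := by
    calc x = ((c • 1 + S) * F) *ᵥ x := by rw [hF, one_mulVec]
      _ = c • y + S *ᵥ y := by rw [← mulVec_mulVec, add_mulVec, smul_mulVec, one_mulVec]
  have hSy : 0 ≤ y ⬝ᵥ S *ᵥ y := by simpa using hS.dotProduct_mulVec_nonneg y
  have hSySy : 0 ≤ S *ᵥ y ⬝ᵥ S *ᵥ y := by simpa using dotProduct_self_star_nonneg (S *ᵥ y)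
  have hxSy : x ⬝ᵥ S *ᵥ y = c * (y ⬝ᵥ S *ᵥ y) + S *ᵥ y ⬝ᵥ S *ᵥ y := by
    rw [hx, add_dotProduct, smul_dotProduct, smul_eq_mul]
  have hxx : x ⬝ᵥ x = c * (x ⬝ᵥ y) + x ⬝ᵥ S *ᵥ y := by
    calc x ⬝ᵥ x = x ⬝ᵥ (c • y + S *ᵥ y) := by rw [← hx]
      _ = c * (x ⬝ᵥ y) + x ⬝ᵥ S *ᵥ y := by rw [dotProduct_add, dotProduct_smul, smul_eq_mul]
  rw [le_inv_mul_iff₀ hc]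
  nlinarith

end Matrix

noncomputable def gramIntegral {m n : Type*} [Fintype m] (Ω : ℝ → Matrix m n ℝ) (t : ℝ) :
    Matrix n n ℝ :=
  of fun i j => ∫ s in (0 : ℝ)..t, ((Ω s)ᵀ * Ω s) i j

section gramIntegral

variable {m n : Type*} [Fintype m] {Ω : ℝ → Matrix m n ℝ}

@[simp]
theorem gramIntegral_zero : gramIntegral Ω 0 = 0 := by
  ext i j
  simp [gramIntegral]

theorem gramIntegral_posSemidef [Fintype n] (hΩ : Continuous Ω) {t : ℝ} (ht : 0 ≤ t) :
    (gramIntegral Ω t).PosSemidef := by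
  have hP : Continuous fun s => (Ω s)ᵀ * Ω s := hΩ.matrix_transpose.matrix_mul hΩ
  refine PosSemidef.of_dotProduct_mulVec_nonneg ?_ fun x => ?_
  · ext i j
    simp [gramIntegral, mul_apply, mul_comm]
  · rw [gramIntegral, dotProduct_of_intervalIntegral_mulVec hP]
    exact intervalIntegral.integral_nonneg ht fun s _ =>
      (posSemidef_conjTranspose_mul_self (Ω s)).dotProduct_mulVec_nonneg x

end gramIntegral

section LinftyOp

/- The ℓ∞-operator norm makes square matrices a normed `ℝ`-algebra, and it induces the product
topology, so derivatives may still be taken entrywise. -/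
attribute [local instance] Matrix.linftyOpNormedAddCommGroup Matrix.linftyOpNormedSpace
  Matrix.linftyOpNormedRing Matrix.linftyOpNormedAlgebra

theorem Matrix.hasDerivAt_iff_entrywise {m n : Type*} [Fintype m] [Fintype n]
    {f : ℝ → Matrix m n ℝ} {f' : Matrix m n ℝ} {t : ℝ} :
    HasDerivAt f f' t ↔ ∀ i j, HasDerivAt (fun s => f s i j) (f' i j) t :=
  hasDerivAt_iff_tendsto_slope.trans <| tendsto_pi_nhds.trans <| forall_congr' fun _ =>
    tendsto_pi_nhds.trans <| forall_congr' fun _ => hasDerivAt_iff_tendsto_slope.symm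

theorem hasDerivAt_gramIntegral {m n : Type*} [Fintype m] [Fintype n] {Ω : ℝ → Matrix m n ℝ}
    (hΩ : Continuous Ω) (t : ℝ) : HasDerivAt (gramIntegral Ω) ((Ω t)ᵀ * Ω t) t :=
  Matrix.hasDerivAt_iff_entrywise.2 fun i j =>
    ((hΩ.matrix_transpose.matrix_mul hΩ).matrix_elem i j).integral_hasStrictDerivAt 0 t
      |>.hasDerivAt

theorem riccati_mul_eq_one {m n : Type*} [Fintype m] [Fintype n] [DecidableEq n]
    {Ω : ℝ → Matrix m n ℝ} (hΩ : Continuous Ω) {α f₀ : ℝ} (hf₀ : f₀ ≠ 0)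
    {F : ℝ → Matrix n n ℝ} (hF0 : F 0 = f₀⁻¹ • 1)
    (hF : ∀ t, 0 ≤ t → ∀ i j, HasDerivAt (fun s => F s i j)
      ((-α • (F t * (Ω t)ᵀ * Ω t * F t)) i j) t) {t : ℝ} (ht : 0 ≤ t) :
    F t * (f₀ • 1 + α • gramIntegral Ω t) = 1 := by
  replace hF := fun s hs => Matrix.hasDerivAt_iff_entrywise.2 (hF s hs)
  set G := fun s => f₀ • (1 : Matrix n n ℝ) + α • gramIntegral Ω s
  have hG : ∀ s, HasDerivAt G (α • ((Ω s)ᵀ * Ω s)) s := fun s =>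
    ((hasDerivAt_gramIntegral hΩ s).const_smul α).const_add _
  have hu : ∀ s ∈ Icc 0 t, HasDerivAt (fun s => F s * G s - 1)
      ((-α • (F s * ((Ω s)ᵀ * Ω s))) * (F s * G s - 1)) s := by
    intro s hs
    refine (((hF s hs.1).fun_mul (hG s)).sub_const 1).congr_deriv ?_
    simp only [smul_mul_assoc, mul_smul_comm, mul_sub, mul_one, Matrix.mul_assoc]
    module
  have hA : ContinuousOn (fun s => -α • (F s * ((Ω s)ᵀ * Ω s))) (Icc 0 t) := by
    have hFc : ContinuousOn F (Icc 0 t) := fun s hs => (hF s hs.1).continuousAt.continuousWithinAt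
    exact (hFc.fun_mul (hΩ.matrix_transpose.matrix_mul hΩ).continuousOn).fun_const_smul _
  have h0 : F 0 * G 0 - 1 = 0 := by simp [G, hF0, hf₀]
  exact sub_eq_zero.1 (eq_zero_of_hasDerivAt_eq_mul_self hA hu h0 t ⟨ht, le_rfl⟩)

end LinftyOp

theorem riccati_flow_properties_general {m p : ℕ}
    (Ω : ℝ → Matrix (Fin m) (Fin p) ℝ) (hΩc : Continuous Ω)
    (α f₀ : ℝ) (hα : 0 < α) (hf₀ : 0 < f₀)
    (F : ℝ → Matrix (Fin p) (Fin p) ℝ)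
    (hF0 : F 0 = (1 / f₀) • (1 : Matrix (Fin p) (Fin p) ℝ))
    (hFode : ∀ t : ℝ, 0 ≤ t → ∀ i j, HasDerivAt (fun s => F s i j)
      ((-α • (F t * (Ω t)ᵀ * Ω t * F t)) i j) t) :
    ∀ t : ℝ, 0 ≤ t →
      IsUnit (F t) ∧
      (F t)⁻¹ = f₀ • (1 : Matrix (Fin p) (Fin p) ℝ) +
        α • Matrix.of (fun i j => ∫ s in (0 : ℝ)..t, ((Ω s)ᵀ * Ω s) i j) ∧
      (F t)ᵀ = F t ∧
      (F t).PosDef ∧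
      ∀ x : Fin p → ℝ, x ⬝ᵥ (F t).mulVec x ≤ (1 / f₀) * (x ⬝ᵥ x) := by
  intro t ht
  have hFG : F t * (f₀ • 1 + α • gramIntegral Ω t) = 1 :=
    riccati_mul_eq_one hΩc hf₀.ne' (one_div f₀ ▸ hF0) hFode ht
  have hS : (α • gramIntegral Ω t).PosSemidef := (gramIntegral_posSemidef hΩc ht).smul hα.le
  have hFpos : (F t).PosDef := by
    rw [← inv_eq_left_inv hFG]
    exact ((PosDef.one.smul hf₀).add_posSemidef hS).inv
  refine ⟨hFpos.isUnit, inv_eq_right_inv hFG, ?_, hFpos, fun x => ?_⟩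
  · simpa using hFpos.isHermitian.eq
  · simpa using dotProduct_mulVec_le_of_smul_one_add_mul_eq_one hf₀ hS (mul_eq_one_comm.1 hFG) x

/-- for the Riccati-type flow `F' = −αFΩᵀΩF`, `F(0) = (1/f₀)I`,
the matrix `F(t)` is invertible with `F(t)⁻¹ = f₀I + α∫₀ᵗΩᵀΩ`, symmetric
positive definite, and `F(t) ⪯ (1/f₀)I` for all `t ≥ 0`. -/
theorem riccati_flow_properties {m p : ℕ}
    (Ω : ℝ → Matrix (Fin m) (Fin p) ℝ) (hΩc : Continuous Ω)
    (hΩb : ∃ M : ℝ, ∀ t : ℝ, 0 ≤ t → ∀ i j, |Ω t i j| ≤ M)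
    (α f₀ : ℝ) (hα : 0 < α) (hf₀ : 0 < f₀)
    (F : ℝ → Matrix (Fin p) (Fin p) ℝ)
    (hF0 : F 0 = (1 / f₀) • (1 : Matrix (Fin p) (Fin p) ℝ))
    (hFode : ∀ t : ℝ, 0 ≤ t → ∀ i j, HasDerivAt (fun s => F s i j)
      ((-α • (F t * (Ω t)ᵀ * Ω t * F t)) i j) t) :
    ∀ t : ℝ, 0 ≤ t →
      IsUnit (F t) ∧
      (F t)⁻¹ = f₀ • (1 : Matrix (Fin p) (Fin p) ℝ) +
        α • Matrix.of (fun i j => ∫ s in (0 : ℝ)..t, ((Ω s)ᵀ * Ω s) i j) ∧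
      (F t)ᵀ = F t ∧
      (F t).PosDef ∧
      ∀ x : Fin p → ℝ, x ⬝ᵥ (F t).mulVec x ≤ (1 / f₀) * (x ⬝ᵥ x) :=
  riccati_flow_properties_general Ω hΩc α f₀ hα hf₀ F hF0 hFode
end

section
/- With F as above (F' = −αFΩᵀΩF, F(0) = (1/f₀)I_p), suppose Ω satisfies the interval excitation condition ∫_{t₀}^{t₀+t_c} Ω(s)ᵀΩ(s) ds ⪰ C_c I_p for some constants C_c > 0 and t_c ≥ t₀ > 0. Then for all t ≥ t₀ + t_c, the matrix I_p − f₀ F(t) is positive definite; in particular Δ(t) := det(I_p − f₀F(t)) > 0 for all t ≥ t₀ + t_c. -/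
/-!
Write `W = ΩᵀΩ` and `G(t) = f₀ I + α ∫₀ᵗ W`. Since `G' = α W`, the defect `E = G F - I` satisfies
the linear equation `E' = -α E W F` with `E(0) = 0`, so `E ≡ 0` by Grönwall and `F(t) = G(t)⁻¹`.
For `t ≥ t₀ + t_c` the integral `S = ∫₀ᵗ W` dominates the excitation integral, hence is positive
definite, and `I - f₀ G⁻¹ = G⁻¹ (α G S) G⁻¹` is a congruence of `α G S = α f₀ S + α² S²`.
-/

open Matrix MeasureTheory Set

variable {n : Type*} [Fintype n]

theorem dotProduct_mulVec_of_intervalIntegral {W : ℝ → Matrix n n ℝ} (hW : Continuous W)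
    (a b : ℝ) (x : n → ℝ) :
    x ⬝ᵥ (of fun i j => ∫ s in a..b, W s i j) *ᵥ x = ∫ s in a..b, x ⬝ᵥ W s *ᵥ x := by
  simp only [dotProduct, mulVec, of_apply, Finset.mul_sum]
  rw [intervalIntegral.integral_finsetSum fun i _ =>
    (Continuous.intervalIntegrable (by fun_prop) _ _)]
  refine Finset.sum_congr rfl fun i _ => ?_
  rw [intervalIntegral.integral_finsetSum fun j _ =>
    (Continuous.intervalIntegrable (by fun_prop) _ _)]
  refine Finset.sum_congr rfl fun j _ => ?_
  rw [intervalIntegral.integral_const_mul, intervalIntegral.integral_mul_const]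

theorem posDef_of_intervalIntegral_of_excitation {W : ℝ → Matrix n n ℝ} (hW : Continuous W)
    (hWpos : ∀ s, (W s).PosSemidef) {a b c d k : ℝ} (hca : c ≤ a) (hab : a ≤ b) (hbd : b ≤ d)
    (hk : 0 < k) (hexc : ∀ x, k * (x ⬝ᵥ x) ≤ x ⬝ᵥ (of fun i j => ∫ s in a..b, W s i j) *ᵥ x) :
    (of fun i j => ∫ s in c..d, W s i j).PosDef := by
  refine PosDef.of_dotProduct_mulVec_pos ?_ fun x hx => ?_
  · ext i j
    simp only [conjTranspose_apply, of_apply, star_trivial]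
    exact intervalIntegral.integral_congr fun s _ => by simpa using (hWpos s).isHermitian.apply i j
  · have hxx : 0 < x ⬝ᵥ x := by simpa using dotProduct_self_star_pos_iff.2 hx
    rw [star_trivial, dotProduct_mulVec_of_intervalIntegral hW]
    calc 0 < k * (x ⬝ᵥ x) := mul_pos hk hxx
      _ ≤ ∫ s in a..b, x ⬝ᵥ W s *ᵥ x :=
        (hexc x).trans_eq (dotProduct_mulVec_of_intervalIntegral hW _ _ x)
      _ ≤ ∫ s in c..d, x ⬝ᵥ W s *ᵥ x :=
        intervalIntegral.integral_mono_interval hca hab hbd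
          (Filter.Eventually.of_forall fun s => by simpa using (hWpos s).dotProduct_mulVec_nonneg x)
          (Continuous.intervalIntegrable (by fun_prop) _ _)

theorem posDef_one_sub_smul_inv [DecidableEq n] {S : Matrix n n ℝ} (hS : S.PosDef) {a b : ℝ}
    (ha : 0 ≤ a) (hb : 0 < b) : (1 - a • (a • 1 + b • S)⁻¹).PosDef := by
  set G := a • 1 + b • S
  have hG : G.PosDef := PosDef.posSemidef_add (PosSemidef.one.smul ha) (hS.smul hb)
  have hGdet : IsUnit G.det := hG.det_pos.ne'.isUnit
  have hSS : (Sᴴ * S).PosDef := .conjTranspose_mul_self S (mulVec_injective_of_isUnit hS.isUnit)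
  have hconj : 1 - a • G⁻¹ = star G⁻¹ * (b • (a • S + b • (Sᴴ * S))) * G⁻¹ := by
    have hGS : b • (a • S + b • (Sᴴ * S)) = G * (b • S) := by
      rw [hS.isHermitian.eq]
      simp only [G, add_mul, Matrix.smul_mul, Matrix.mul_smul, Matrix.one_mul]
      module
    rw [star_eq_conjTranspose, hG.inv.isHermitian.eq, hGS, ← Matrix.mul_assoc,
      nonsing_inv_mul _ hGdet, Matrix.one_mul]
    calc 1 - a • G⁻¹ = (G - a • 1) * G⁻¹ := by
          rw [sub_mul, mul_nonsing_inv _ hGdet, smul_mul, one_mul]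
      _ = b • S * G⁻¹ := by simp [G]
  rw [hconj, IsUnit.posDef_star_left_conjugate_iff hG.inv.isUnit]
  exact (PosDef.posSemidef_add (hS.posSemidef.smul ha) (hSS.smul hb)).smul hb

section LinftyOpNorm

variable [DecidableEq n]

-- Matrices carry no global norm; Grönwall only needs a submultiplicative one.
attribute [local instance] Matrix.linftyOpNormedRing Matrix.linftyOpNormedAlgebra

theorem hasDerivAt_matrix_iff {f : ℝ → Matrix n n ℝ} {f' : Matrix n n ℝ} {t : ℝ} :
    HasDerivAt f f' t ↔ ∀ i j, HasDerivAt (fun s => f s i j) (f' i j) t := by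
  refine hasDerivAt_iff_tendsto_slope.trans ?_
  simp only [hasDerivAt_iff_tendsto_slope]
  exact tendsto_pi_nhds.trans (forall_congr' fun i => tendsto_pi_nhds (A := fun _ : n => ℝ))

theorem mul_eq_one_of_hasDerivAt {G F W : ℝ → Matrix n n ℝ} (hW : Continuous W)
    (hG : ∀ t, 0 ≤ t → HasDerivAt G (W t) t)
    (hF : ∀ t, 0 ≤ t → HasDerivAt F (-(F t * W t * F t)) t)
    (h₀ : G 0 * F 0 = 1) {t : ℝ} (ht : 0 ≤ t) : G t * F t = 1 := by
  set E : ℝ → Matrix n n ℝ := fun u => G u * F u - 1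
  have hE : ∀ u, 0 ≤ u → HasDerivAt E (-(E u * (W u * F u))) u := by
    intro u hu
    refine (((hG u hu).mul (hF u hu)).sub_const 1).congr_deriv ?_
    simp only [E]
    noncomm_ring
  have hcont : ContinuousOn (fun u => W u * F u) (Icc 0 t) :=
    hW.continuousOn.mul fun u hu => (hF u hu.1).continuousAt.continuousWithinAt
  obtain ⟨C, hC⟩ := isCompact_Icc.exists_bound_of_continuousOn hcont
  have hEt := eq_zero_of_abs_deriv_le_mul_abs_self_of_eq_zero_right (K := C)
    (fun u hu => (hE u hu.1).continuousAt.continuousWithinAt)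
    (fun u hu => (hE u hu.1).hasDerivWithinAt) (by simp [E, h₀])
    (fun u hu => by
      rw [norm_neg]
      calc ‖E u * (W u * F u)‖ ≤ ‖E u‖ * ‖W u * F u‖ := norm_mul_le _ _
        _ ≤ ‖E u‖ * C := by gcongr; exact hC u (Ico_subset_Icc_self hu)
        _ = C * ‖E u‖ := mul_comm _ _) t ⟨ht, le_rfl⟩
  exact sub_eq_zero.mp hEt

theorem smul_one_add_smul_intervalIntegral_mul_eq_one {W F : ℝ → Matrix n n ℝ} (hW : Continuous W)
    {c α : ℝ} (hF₀ : c • F 0 = 1)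
    (hF : ∀ t, 0 ≤ t → ∀ i j, HasDerivAt (fun s => F s i j) ((-α • (F t * W t * F t)) i j) t)
    {t : ℝ} (ht : 0 ≤ t) :
    (c • 1 + α • of fun i j => ∫ s in (0 : ℝ)..t, W s i j) * F t = 1 := by
  refine mul_eq_one_of_hasDerivAt
    (G := fun t => c • 1 + α • of fun i j => ∫ s in (0 : ℝ)..t, W s i j)
    (hW.const_smul α) (fun u _ => ?_) (fun u hu => ?_) ?_ ht
  · refine (HasDerivAt.const_smul α ?_).const_add _
    exact hasDerivAt_matrix_iff.2 fun i j =>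
      ((hW.matrix_elem i j).integral_hasStrictDerivAt 0 u).hasDerivAt
  · convert hasDerivAt_matrix_iff.2 (hF u hu) using 1
    simp
  · have h0 : (of fun i j => ∫ s in (0 : ℝ)..0, W s i j) = 0 := by ext; simp
    simp only [h0, smul_zero, add_zero, Matrix.smul_mul, Matrix.one_mul, hF₀]

end LinftyOpNorm

/-- under interval excitation of `Ω`, the matrix `I − f₀F(t)`
is positive definite for all `t ≥ t₀ + t_c`; in particular its determinant
`Δ(t)` is positive there. -/
theorem riccati_flow_interval_excitation {m p : ℕ}
    (Ω : ℝ → Matrix (Fin m) (Fin p) ℝ) (hΩc : Continuous Ω)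
    (α f₀ : ℝ) (hα : 0 < α) (hf₀ : 0 < f₀)
    (F : ℝ → Matrix (Fin p) (Fin p) ℝ)
    (hF0 : F 0 = (1 / f₀) • (1 : Matrix (Fin p) (Fin p) ℝ))
    (hFode : ∀ t : ℝ, 0 ≤ t → ∀ i j, HasDerivAt (fun s => F s i j)
      ((-α • (F t * (Ω t)ᵀ * Ω t * F t)) i j) t)
    (Cc t₀ tc : ℝ) (hCc : 0 < Cc) (ht₀ : 0 < t₀) (htc : t₀ ≤ tc)
    (hIE : ∀ x : Fin p → ℝ,
      Cc * (x ⬝ᵥ x) ≤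
        x ⬝ᵥ (Matrix.of fun i j =>
          ∫ s in t₀..(t₀ + tc), ((Ω s)ᵀ * Ω s) i j).mulVec x) :
    ∀ t : ℝ, t₀ + tc ≤ t →
      ((1 : Matrix (Fin p) (Fin p) ℝ) - f₀ • F t).PosDef ∧
      0 < ((1 : Matrix (Fin p) (Fin p) ℝ) - f₀ • F t).det := by
  intro t ht
  set W : ℝ → Matrix (Fin p) (Fin p) ℝ := fun s => (Ω s)ᵀ * Ω s
  have hW : Continuous W := hΩc.matrix_transpose.matrix_mul hΩc
  have hWpos : ∀ s, (W s).PosSemidef := fun s => by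
    simpa [W, conjTranspose_eq_transpose_of_trivial] using posSemidef_conjTranspose_mul_self (Ω s)
  have hS : (of fun i j => ∫ s in (0 : ℝ)..t, W s i j).PosDef :=
    posDef_of_intervalIntegral_of_excitation hW hWpos ht₀.le (by linarith) ht hCc hIE
  have hF₀ : f₀ • F 0 = 1 := by rw [hF0, smul_smul, mul_one_div_cancel hf₀.ne', one_smul]
  have hF : ∀ u, 0 ≤ u → ∀ i j,
      HasDerivAt (fun s => F s i j) ((-α • (F u * W u * F u)) i j) u := fun u hu => by
    simpa only [W, Matrix.mul_assoc] using hFode u hu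
  have hGF := smul_one_add_smul_intervalIntegral_mul_eq_one hW hF₀ hF (by linarith : 0 ≤ t)
  rw [← inv_eq_right_inv hGF]
  have hPD := posDef_one_sub_smul_inv hS hf₀.le hα
  exact ⟨hPD, hPD.det_pos⟩
end
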